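/- arXiv:0901.2186 — 3 statements merged into one kernel-verified Lean document; each statement's English description precedes it below -/
import Mathlib

section
/- For each positive integer i, the map α_i(x) = 1/(x+i) maps Ω into Ω, each α_i is injective, the images α_i(Ω) for distinct i are pairwise disjoint, and Ω is the disjoint union of the images α_i(Ω) over all i ∈ ℕ. -/
/-- `Ω`, the set of irrationals in `[0,1]`. -/
def Omega : Set ℝ := {x | x ∈ Set.Icc (0 : ℝ) 1 ∧ Irrational x}

/-- The branch maps `α_i(x) = 1/(x+i)`. -/
noncomputable def alphaMap (i : ℕ+) (x : ℝ) : ℝ := 1 / (x + (i : ℕ))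

/-!
Since `(α_i x)⁻¹ = x + i`, each `α_i` is injective, and for `x ∈ [0, 1)` the index is recovered
as `i = ⌊(α_i x)⁻¹⌋₊`, so distinct branches have disjoint images of `Ω`. Conversely, `y ∈ Ω` is
`α_i x` for `i = ⌊y⁻¹⌋₊ ≥ 1` and `x = y⁻¹ - i`, which is irrational and lies in `[0, 1)`.
-/

open Set

theorem alphaMap_eq_inv (i : ℕ+) (x : ℝ) : alphaMap i x = (x + (i : ℕ))⁻¹ :=
  one_div _

theorem inv_alphaMap (i : ℕ+) (x : ℝ) : (alphaMap i x)⁻¹ = x + (i : ℕ) := by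
  rw [alphaMap_eq_inv, inv_inv]

theorem alphaMap_injective (i : ℕ+) : Function.Injective (alphaMap i) := fun x y h => by
  simpa only [inv_alphaMap, add_left_inj] using congrArg (·⁻¹) h

theorem floor_inv_alphaMap (i : ℕ+) {x : ℝ} (hx : x ∈ Ico 0 1) :
    ⌊(alphaMap i x)⁻¹⌋₊ = i := by
  rw [inv_alphaMap, Nat.floor_add_natCast hx.1, Nat.floor_eq_zero.mpr hx.2, zero_add]

theorem disjoint_image_alphaMap {s : Set ℝ} (hs : s ⊆ Ico 0 1) {i j : ℕ+} (hij : i ≠ j) :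
    Disjoint (alphaMap i '' s) (alphaMap j '' s) := by
  rw [disjoint_left]
  rintro _ ⟨x, hx, rfl⟩ ⟨y, hy, hxy⟩
  apply hij
  rw [← PNat.coe_inj, ← floor_inv_alphaMap i (hs hx), ← floor_inv_alphaMap j (hs hy), hxy]

theorem Omega_subset_Ico : Omega ⊆ Ico 0 1 :=
  fun _ ⟨hx, hirr⟩ => ⟨hx.1, hx.2.lt_of_ne hirr.ne_one⟩

theorem mapsTo_alphaMap_Omega (i : ℕ+) : MapsTo (alphaMap i) Omega Omega := by
  intro x ⟨hx, hirr⟩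
  have hxi : 1 ≤ x + (i : ℕ) := by
    have : (1 : ℝ) ≤ (i : ℕ) := Nat.one_le_cast.mpr i.pos
    linarith [hx.1]
  rw [alphaMap_eq_inv]
  exact ⟨⟨by positivity, inv_le_one_of_one_le₀ hxi⟩, (hirr.add_natCast _).inv⟩

theorem Omega_subset_iUnion_image_alphaMap : Omega ⊆ ⋃ i : ℕ+, alphaMap i '' Omega := by
  intro y hy
  have hy0 : 0 < y := hy.1.1.lt_of_ne hy.2.ne_zero.symm
  have ht : 1 ≤ y⁻¹ := one_le_inv₀ hy0 |>.mpr hy.1.2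
  obtain ⟨i, hi⟩ : ∃ i : ℕ+, (i : ℕ) = ⌊y⁻¹⌋₊ := ⟨⟨_, Nat.floor_pos.mpr ht⟩, rfl⟩
  have hx : y⁻¹ - (i : ℕ) ∈ Omega := by
    rw [hi]
    exact ⟨⟨sub_nonneg.mpr (Nat.floor_le (by positivity)),
      by linarith [Nat.lt_floor_add_one y⁻¹]⟩, hy.2.inv.sub_natCast _⟩
  refine mem_iUnion.mpr ⟨i, _, hx, ?_⟩
  rw [alphaMap_eq_inv, sub_add_cancel, inv_inv]

/-- `{α_i : i ∈ ℕ}` is a branching function system on `Ω`: each `α_i` maps `Ω`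
into `Ω` injectively, the images are pairwise disjoint, and their union is `Ω`. -/
theorem alpha_branching_function_system :
    (∀ i : ℕ+, Set.MapsTo (alphaMap i) Omega Omega) ∧
    (∀ i : ℕ+, Set.InjOn (alphaMap i) Omega) ∧
    (∀ i j : ℕ+, i ≠ j → Disjoint (alphaMap i '' Omega) (alphaMap j '' Omega)) ∧
    (⋃ i : ℕ+, alphaMap i '' Omega) = Omega :=
  ⟨mapsTo_alphaMap_Omega, fun i => (alphaMap_injective i).injOn,
    fun _ _ => disjoint_image_alphaMap Omega_subset_Ico,
    (iUnion_subset fun i => (mapsTo_alphaMap_Omega i).image_subset).antisymm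
      Omega_subset_iUnion_image_alphaMap⟩
end

section
/- Two irrational numbers x and y are related by a modular transformation (x = (ay+b)/(cy+d) with a,b,c,d ∈ ℤ and ad - bc = ±1) if and only if their continued fraction expansions eventually coincide, i.e. there exist m, n ≥ 0 such that the shifted sequences σ^m(CFE(x)) = σ^n(CFE(y)). -/
/-- The Gauss map `τ(x) = 1/x - ⌊1/x⌋`. -/
noncomputable def gaussMap (x : ℝ) : ℝ := Int.fract (1 / x)

/-- The `n`-th partial quotient (indexed from `0`) of the continued fraction
expansion of a real `x` (taking the fractional part of `x` first):
`a_{n+1}(x) = ⌊1/τⁿ({x})⌋`. -/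
noncomputable def pq (x : ℝ) (n : ℕ) : ℤ := ⌊1 / (gaussMap^[n] (Int.fract x))⌋

/-!
The Gauss map `u ↦ 1/u - ⌊1/u⌋` is itself a modular transformation, so an irrational `x` is
modularly equivalent to each of its complete quotients `gaussMap^[m] (fract x)`. If two expansions
share a tail, two such complete quotients have the same partial quotients, hence coincide because
continued fractions converge.

Conversely, the Euclidean algorithm on the lower row `(c, d)` writes a modular transformation in
terms of integer translations, `y ↦ 1/y` and `y ↦ ±y`. Translations leave the partial quotients
unchanged, `1/y` shifts them by one when `y > 1`, and `y ↦ -y` reduces to these two moves through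
`1 - u = 1 / (1 + 1 / (1/u - 1))` for `0 < u < 1`.
-/

theorem Irrational.fract {x : ℝ} (hx : Irrational x) : Irrational (Int.fract x) := by
  simpa only [Int.self_sub_floor] using hx.sub_intCast ⌊x⌋

theorem Irrational.gaussMap {x : ℝ} (hx : Irrational x) : Irrational (gaussMap x) := by
  simpa only [_root_.gaussMap, one_div] using hx.inv.fract

theorem Irrational.gaussMap_iterate_fract {x : ℝ} (hx : Irrational x) (n : ℕ) :
    Irrational (_root_.gaussMap^[n] (Int.fract x)) := by
  induction n with
  | zero => exact hx.fract
  | succ n ih => rw [Function.iterate_succ_apply']; exact ih.gaussMap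

theorem ne_zero_or_ne_zero_of_det_ne_zero {a b c d : ℤ} (hdet : a * d - b * c ≠ 0) :
    c ≠ 0 ∨ d ≠ 0 := by
  contrapose! hdet
  obtain ⟨rfl, rfl⟩ := hdet
  ring

theorem Irrational.intCast_mul_add_intCast_ne_zero {y : ℝ} (hy : Irrational y) {c d : ℤ}
    (hcd : c ≠ 0 ∨ d ≠ 0) : (c * y + d : ℝ) ≠ 0 := by
  rcases eq_or_ne c 0 with rfl | hc
  · simpa using hcd
  · exact ((hy.intCast_mul hc).add_intCast d).ne_zero

theorem eq_div_of_eq_mul_add_div {x y : ℝ} (hy : Irrational y) {a b c d : ℤ}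
    (hdet : a * d - b * c ≠ 0) (hx : x = (a * y + b) / (c * y + d)) :
    y = (d * x - b) / (-c * x + a) := by
  have hD := hy.intCast_mul_add_intCast_ne_zero (ne_zero_or_ne_zero_of_det_ne_zero hdet)
  have hxD : x * (c * y + d) = a * y + b := by rw [hx, div_mul_cancel₀ _ hD]
  have hprod : (-c * x + a) * (c * y + d) = ((a * d - b * c : ℤ) : ℝ) := by
    push_cast
    linear_combination -(c : ℝ) * hxD
  have hN : (-c * x + a : ℝ) ≠ 0 := by
    rintro h
    rw [h, zero_mul] at hprod
    exact hdet (by exact_mod_cast hprod.symm)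
  rw [eq_div_iff hN]
  linear_combination -hxD

theorem Irrational.intCast_mul_add_div {y : ℝ} (hy : Irrational y) {a b c d : ℤ}
    (hdet : a * d - b * c ≠ 0) : Irrational ((a * y + b) / (c * y + d)) := by
  rintro ⟨q, hq⟩
  refine hy ⟨(d * q - b) / (-c * q + a), ?_⟩
  rw [eq_div_of_eq_mul_add_div hy hdet hq]
  push_cast
  rfl

theorem gaussMap_mem_Ico (x : ℝ) : gaussMap x ∈ Set.Ico 0 1 :=
  ⟨Int.fract_nonneg _, Int.fract_lt_one _⟩

theorem gaussMap_iterate_fract_mem_Ico (x : ℝ) (n : ℕ) :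
    gaussMap^[n] (Int.fract x) ∈ Set.Ico 0 1 := by
  cases n with
  | zero => exact ⟨Int.fract_nonneg x, Int.fract_lt_one x⟩
  | succ n => rw [Function.iterate_succ_apply']; exact gaussMap_mem_Ico _

theorem pq_fract (x : ℝ) : pq (Int.fract x) = pq x := by
  funext k
  simp only [pq, Int.fract_fract]

theorem pq_add_intCast (x : ℝ) (n : ℤ) : pq (x + n) = pq x := by
  funext k
  simp only [pq, Int.fract_add_intCast]

theorem pq_add (x : ℝ) (m k : ℕ) : pq x (m + k) = pq (gaussMap^[m] (Int.fract x)) k := by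
  rw [pq, pq, Int.fract_eq_self.2 (gaussMap_iterate_fract_mem_Ico x m),
    ← Function.iterate_add_apply, add_comm]

def TailEquiv (x y : ℝ) : Prop := ∃ m n : ℕ, ∀ k : ℕ, pq x (m + k) = pq y (n + k)

namespace TailEquiv

theorem symm {x y : ℝ} (h : TailEquiv x y) : TailEquiv y x :=
  let ⟨m, n, h⟩ := h
  ⟨n, m, fun k => (h k).symm⟩

theorem trans {x y z : ℝ} (hxy : TailEquiv x y) (hyz : TailEquiv y z) : TailEquiv x z := by
  obtain ⟨m, n, hxy⟩ := hxy
  obtain ⟨m', n', hyz⟩ := hyz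
  refine ⟨m + m', n' + n, fun k => ?_⟩
  calc pq x (m + m' + k) = pq y (n + (m' + k)) := by rw [add_assoc, hxy]
    _ = pq y (m' + (n + k)) := by rw [Nat.add_left_comm]
    _ = pq z (n' + n + k) := by rw [hyz, add_assoc]

instance : Trans TailEquiv TailEquiv TailEquiv := ⟨trans⟩

theorem of_pq_eq {x y : ℝ} (h : pq x = pq y) : TailEquiv x y :=
  ⟨0, 0, fun k => by rw [h]⟩

end TailEquiv

theorem tailEquiv_gaussMap_iterate_fract (x : ℝ) (m : ℕ) :
    TailEquiv x (gaussMap^[m] (Int.fract x)) :=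
  ⟨m, 0, fun k => by rw [pq_add, zero_add]⟩

theorem tailEquiv_fract (x : ℝ) : TailEquiv (Int.fract x) x := .of_pq_eq (pq_fract x)

theorem tailEquiv_add_intCast (x : ℝ) (n : ℤ) : TailEquiv (x + n) x :=
  .of_pq_eq (pq_add_intCast x n)

theorem tailEquiv_one_div_of_one_lt {x : ℝ} (hx : 1 < x) : TailEquiv (1 / x) x := by
  have h : 1 / x ∈ Set.Ico 0 1 := ⟨by positivity, (div_lt_one (by positivity)).2 hx⟩
  calc TailEquiv (1 / x) (gaussMap^[1] (Int.fract (1 / x))) :=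
        tailEquiv_gaussMap_iterate_fract _ 1
    _ = Int.fract x := by
        rw [Function.iterate_one, Int.fract_eq_self.2 h, gaussMap, one_div_one_div]
    TailEquiv _ x := tailEquiv_fract x

theorem tailEquiv_one_div_of_pos {x : ℝ} (hx : Irrational x) (hpos : 0 < x) :
    TailEquiv (1 / x) x := by
  rcases hx.ne_one.lt_or_gt with hlt | hgt
  · simpa only [one_div_one_div] using
      (tailEquiv_one_div_of_one_lt ((one_lt_div hpos).2 hlt)).symm
  · exact tailEquiv_one_div_of_one_lt hgt

theorem tailEquiv_one_sub {u : ℝ} (hu : Irrational u) (hpos : 0 < u) (hlt : u < 1) :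
    TailEquiv (1 - u) u := by
  have hinv : Irrational (1 / u) := by simpa only [one_div] using hu.inv
  have hv : 0 < 1 / u - 1 := sub_pos.2 ((one_lt_div hpos).2 hlt)
  have hw : 0 < 1 - u := sub_pos.2 hlt
  calc TailEquiv (1 - u) (1 / (1 - u)) :=
        (tailEquiv_one_div_of_pos (by simpa using hu.intCast_sub 1) hw).symm
    _ = 1 / (1 / u - 1) + (1 : ℤ) := by
        field_simp [hpos.ne', hw.ne']
        ring
    TailEquiv _ (1 / (1 / u - 1)) := tailEquiv_add_intCast _ 1
    TailEquiv _ (1 / u - 1) := tailEquiv_one_div_of_pos (by simpa using hinv.sub_intCast 1) hv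
    _ = 1 / u + (-1 : ℤ) := by push_cast; ring
    TailEquiv _ (1 / u) := tailEquiv_add_intCast _ (-1)
    TailEquiv _ u := tailEquiv_one_div_of_pos hu hpos

theorem tailEquiv_neg {x : ℝ} (hx : Irrational x) : TailEquiv (-x) x := by
  have hfract : 0 < Int.fract x := (Int.fract_nonneg x).lt_of_ne hx.fract.ne_zero.symm
  calc TailEquiv (-x) (Int.fract (-x)) := (tailEquiv_fract _).symm
    _ = 1 - Int.fract x := Int.fract_neg hx.fract.ne_zero
    TailEquiv _ (Int.fract x) := tailEquiv_one_sub hx.fract hfract (Int.fract_lt_one x)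
    TailEquiv _ x := tailEquiv_fract x

theorem tailEquiv_one_div {x : ℝ} (hx : Irrational x) : TailEquiv (1 / x) x := by
  rcases hx.ne_zero.lt_or_gt with hneg | hpos
  · calc 1 / x = -(1 / -x) := by rw [one_div_neg_eq_neg_one_div, neg_neg]
      TailEquiv _ (1 / -x) := tailEquiv_neg (by simpa only [one_div] using hx.neg.inv)
      TailEquiv _ (-x) := tailEquiv_one_div_of_pos hx.neg (neg_pos.2 hneg)
      TailEquiv _ x := tailEquiv_neg hx
  · exact tailEquiv_one_div_of_pos hx hpos

theorem tailEquiv_unit_mul_add_intCast {x : ℝ} (hx : Irrational x) {ε : ℤ} (hε : IsUnit ε)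
    (n : ℤ) : TailEquiv (ε * x + n) x := by
  rcases Int.isUnit_iff.1 hε with rfl | rfl
  · simpa only [Int.cast_one, one_mul] using tailEquiv_add_intCast x n
  · calc ((-1 : ℤ) : ℝ) * x + n = -x + n := by push_cast; ring
      TailEquiv _ (-x) := tailEquiv_add_intCast (-x) n
      TailEquiv _ x := tailEquiv_neg hx

theorem tailEquiv_mul_add_div_of_isUnit {y : ℝ} (hy : Irrational y) {a d : ℤ}
    (had : IsUnit (a * d)) (b : ℤ) : TailEquiv ((a * y + b) / d) y := by
  have hd : (d : ℝ) * d = 1 := by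
    exact_mod_cast Int.isUnit_mul_self (isUnit_of_mul_isUnit_right had)
  calc (a * y + b) / d = ((a * d : ℤ) : ℝ) * y + (b * d : ℤ) := by
        rw [div_eq_iff (left_ne_zero_of_mul_eq_one hd)]
        push_cast
        linear_combination (-(a * y + b) : ℝ) * hd
    TailEquiv _ y := tailEquiv_unit_mul_add_intCast hy had _

def ModularEquiv (x y : ℝ) : Prop :=
  ∃ a b c d : ℤ, IsUnit (a * d - b * c) ∧ x = (a * y + b) / (c * y + d)

namespace ModularEquiv

theorem symm {x y : ℝ} (hy : Irrational y) (h : ModularEquiv x y) : ModularEquiv y x := by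
  obtain ⟨a, b, c, d, hdet, hx⟩ := h
  refine ⟨d, -b, -c, a, by convert hdet using 1; ring, ?_⟩
  rw [eq_div_of_eq_mul_add_div hy hdet.ne_zero hx]
  push_cast
  ring

theorem trans {x y z : ℝ} (hz : Irrational z) (hxy : ModularEquiv x y) (hyz : ModularEquiv y z) :
    ModularEquiv x z := by
  obtain ⟨a, b, c, d, hdet, rfl⟩ := hxy
  obtain ⟨a', b', c', d', hdet', rfl⟩ := hyz
  have hD := hz.intCast_mul_add_intCast_ne_zero (ne_zero_or_ne_zero_of_det_ne_zero hdet'.ne_zero)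
  refine ⟨a * a' + b * c', a * b' + b * d', c * a' + d * c', c * b' + d * d',
    by convert hdet.mul hdet' using 1; ring, ?_⟩
  have hy : (a' * z + b') / (c' * z + d') * (c' * z + d') = (a' * z + b' : ℝ) :=
    div_mul_cancel₀ _ hD
  rw [← mul_div_mul_right _ _ hD]
  push_cast
  congr 1
  · linear_combination (a : ℝ) * hy
  · linear_combination (c : ℝ) * hy

theorem tailEquiv {x y : ℝ} (hy : Irrational y) (h : ModularEquiv x y) : TailEquiv x y := by
  obtain ⟨a, b, c, d, hdet, rfl⟩ := h
  induction hN : c.natAbs using Nat.strong_induction_on generalizing a b c d with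
  | _ N ih =>
    rcases eq_or_ne c 0 with rfl | hc
    · simpa using tailEquiv_mul_add_div_of_isUnit hy (by simpa using hdet) b
    · set q := a / c
      set r := a % c
      have ha : a = c * q + r := (Int.mul_ediv_add_emod a c).symm
      have hr : r.natAbs < N := by
        have hlt := Int.emod_lt_abs a hc
        have hnonneg := Int.emod_nonneg a hc
        rw [Int.abs_eq_natAbs] at hlt
        omega
      have hdet' : IsUnit (c * (b - q * d) - d * r) := by
        convert hdet.neg using 1
        rw [ha]
        ring
      have hD : (c * y + d : ℝ) ≠ 0 := hy.intCast_mul_add_intCast_ne_zero (Or.inl hc)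
      -- one Euclidean step: `x = q + 1 / w`, where `w` has the smaller lower-left entry `r`
      set w := (c * y + d) / (r * y + ((b - q * d : ℤ) : ℝ))
      calc (a * y + b) / (c * y + d) = 1 / w + q := by
            rw [one_div_div, div_add' _ _ _ hD, ha]
            push_cast
            ring
        TailEquiv _ (1 / w) := tailEquiv_add_intCast _ q
        TailEquiv _ w := tailEquiv_one_div (hy.intCast_mul_add_div hdet'.ne_zero)
        TailEquiv _ y := ih _ hr c d r (b - q * d) hdet' rfl

end ModularEquiv

theorem modularEquiv_fract (x : ℝ) : ModularEquiv x (Int.fract x) :=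
  ⟨1, ⌊x⌋, 0, 1, by simp, by
    push_cast
    rw [one_mul, zero_mul, zero_add, div_one, Int.fract_add_floor]⟩

theorem modularEquiv_gaussMap (u : ℝ) : ModularEquiv u (gaussMap u) :=
  ⟨0, 1, 1, ⌊1 / u⌋, by simp, by
    push_cast
    rw [zero_mul, zero_add, one_mul, gaussMap, Int.fract_add_floor, one_div_one_div]⟩

theorem modularEquiv_gaussMap_iterate_fract {x : ℝ} (hx : Irrational x) (n : ℕ) :
    ModularEquiv x (gaussMap^[n] (Int.fract x)) := by
  induction n with
  | zero => exact modularEquiv_fract x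
  | succ n ih =>
    rw [Function.iterate_succ_apply']
    exact ih.trans (hx.gaussMap_iterate_fract n).gaussMap (modularEquiv_gaussMap _)

theorem GenContFract.of_s_get?_eq_pq {u : ℝ} (hu : Irrational u) (n : ℕ) :
    (GenContFract.of u).s.get? n = some ⟨1, pq u n⟩ := by
  induction n generalizing u with
  | zero =>
    exact (GenContFract.of_s_head hu.fract.ne_zero).trans (by simp [pq])
  | succ n ih =>
    rw [GenContFract.of_s_succ, ih hu.fract.inv, ← pq_fract, ← one_div, ← gaussMap,
      ← Function.iterate_one gaussMap, ← pq_add, add_comm]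

theorem eq_of_floor_eq_of_pq_eq {u v : ℝ} (hu : Irrational u) (hv : Irrational v)
    (hfloor : ⌊u⌋ = ⌊v⌋) (hpq : pq u = pq v) : u = v := by
  have hof : GenContFract.of u = GenContFract.of v := by
    refine GenContFract.ext (by rw [GenContFract.of_h_eq_floor, GenContFract.of_h_eq_floor, hfloor])
      (Stream'.Seq.ext fun n => ?_)
    rw [GenContFract.of_s_get?_eq_pq hu, GenContFract.of_s_get?_eq_pq hv, hpq]
  exact tendsto_nhds_unique (hof ▸ GenContFract.of_convergence u) (GenContFract.of_convergence v)

theorem TailEquiv.modularEquiv {x y : ℝ} (hx : Irrational x) (hy : Irrational y)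
    (h : TailEquiv x y) : ModularEquiv x y := by
  obtain ⟨m, n, h⟩ := h
  have hu := hx.gaussMap_iterate_fract m
  have hv := hy.gaussMap_iterate_fract n
  have huv : gaussMap^[m] (Int.fract x) = gaussMap^[n] (Int.fract y) :=
    eq_of_floor_eq_of_pq_eq hu hv
      (by rw [Int.floor_eq_zero_iff.2 (gaussMap_iterate_fract_mem_Ico x m),
        Int.floor_eq_zero_iff.2 (gaussMap_iterate_fract_mem_Ico y n)])
      (funext fun k => by rw [← pq_add, ← pq_add, h])
  exact (modularEquiv_gaussMap_iterate_fract hx m).trans hy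
    (huv ▸ (modularEquiv_gaussMap_iterate_fract hy n).symm hv)

/-- Serret's theorem: two irrationals `x, y` are related by a modular
transformation `x = (ay+b)/(cy+d)`, `ad - bc = ±1`, iff their continued
fraction expansions eventually coincide. -/
theorem modular_equiv_iff_tail_equiv :
    ∀ x y : ℝ, Irrational x → Irrational y →
      ((∃ a b c d : ℤ, (a * d - b * c = 1 ∨ a * d - b * c = -1) ∧
          x = ((a : ℝ) * y + b) / ((c : ℝ) * y + d)) ↔
        (∃ m n : ℕ, ∀ k : ℕ, pq x (m + k) = pq y (n + k))) := by
  intro x y hx hy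
  simp only [← Int.isUnit_iff]
  exact ⟨ModularEquiv.tailEquiv hy, TailEquiv.modularEquiv hx hy⟩
end

section
/- Let H be a Hilbert space, S : H → H an isometry, and v, w ∈ H with Sv = v. If the family ((S*)^n w)_{n≥1} is orthonormal (in particular ‖(S*)^n w‖ = 1 for all n while (S*)^n w are pairwise orthogonal), then ⟨v, w⟩ = 0. -/
open ContinuousLinearMap

theorem ContinuousLinearMap.inner_adjoint_pow_right {𝕜 E : Type*} [RCLike 𝕜]
    [NormedAddCommGroup E] [InnerProductSpace 𝕜 E] [CompleteSpace E]
    (A : E →L[𝕜] E) (n : ℕ) (x y : E) :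
    inner 𝕜 x ((adjoint A ^ n) y) = inner 𝕜 ((A ^ n) x) y := by
  rw [← star_eq_adjoint, ← star_pow, star_eq_adjoint, adjoint_inner_right]

theorem Orthonormal.eq_zero_of_forall_inner_eq {𝕜 E ι : Type*} [RCLike 𝕜]
    [SeminormedAddCommGroup E] [InnerProductSpace 𝕜 E] [Infinite ι] {e : ι → E}
    (he : Orthonormal 𝕜 e) (x : E) {c : 𝕜} (h : ∀ i, inner 𝕜 x (e i) = c) : c = 0 := by
  have bessel := he.inner_products_summable x
  simp only [norm_inner_symm _ x, h, summable_const_iff] at bessel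
  simpa using bessel

theorem inner_eq_zero_of_fixed_and_chain_general
    {H : Type*} [NormedAddCommGroup H] [InnerProductSpace ℂ H] [CompleteSpace H]
    (S : H →L[ℂ] H)
    (v w : H) (hv : S v = v)
    (hw : Orthonormal ℂ (fun n : ℕ => (adjoint S ^ (n + 1)) w)) :
    inner ℂ v w = (0 : ℂ) := by
  refine hw.eq_zero_of_forall_inner_eq v fun n => ?_
  rw [inner_adjoint_pow_right, FunLike.coe_pow_eq_iterate, Function.iterate_fixed hv]

/-- If `S` is an isometry on a Hilbert space, `Sv = v`, and the vectors
`(S*)ⁿ w`, `n ≥ 1`, form an orthonormal family, then `⟨v, w⟩ = 0`. -/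
theorem inner_eq_zero_of_fixed_and_chain
    {H : Type*} [NormedAddCommGroup H] [InnerProductSpace ℂ H] [CompleteSpace H]
    (S : H →L[ℂ] H) (hS : ∀ x : H, ‖S x‖ = ‖x‖)
    (v w : H) (hv : S v = v)
    (hw : Orthonormal ℂ (fun n : ℕ => (adjoint S ^ (n + 1)) w)) :
    inner ℂ v w = (0 : ℂ) :=
  inner_eq_zero_of_fixed_and_chain_general S v w hv hw
end
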